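/- Let B be the incidence matrix of a symmetric 2-(v,k,λ) design and suppose there exists a complex number a of absolute value 1 such that the matrix obtained from B by replacing every 0 entry with a is a complex Hadamard matrix of order v. Then v ≤ 4(k−λ), i.e. the order of the design n = k−λ satisfies v ≤ 4n. -/

import Mathlib

open Matrix

/-- `H` is a complex Hadamard matrix: unimodular entries and `H Hᴴ = n • I`. -/
def IsCHadamard {n : Type*} [Fintype n] [DecidableEq n] (H : Matrix n n ℂ) : Prop :=
  (∀ i j, ‖H i j‖ = 1) ∧
    H * H.conjTranspose = (Fintype.card n : ℂ) • 1

/-- `B` is the incidence matrix (over `ℂ`, with `0`/`1` entries) of a symmetric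
`2-(v,k,λ)` design. -/
def IsIncidence (v k lam : ℕ) (B : Matrix (Fin v) (Fin v) ℂ) : Prop :=
  (∀ i j, B i j = 0 ∨ B i j = 1) ∧
    (∀ i, ∑ j, B i j = (k : ℂ)) ∧ (∀ j, ∑ i, B i j = (k : ℂ)) ∧
    B * B.transpose = ((k : ℂ) - (lam : ℂ)) • 1 + (lam : ℂ) • Matrix.of (fun _ _ => (1 : ℂ))

open ComplexConjugate

/-
Take two distinct rows `x`, `y` of `B`. The corresponding rows of `H = B + a (J - B)` are
orthogonal, and expanding their inner product with `|a| = 1`, row sums `k` and intersection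
number `λ` gives `v = |1 - a|² (k - λ) = (2 - 2 Re a) (k - λ)`. Since `Re a ≥ -1`, `v ≤ 4 (k - λ)`.
-/

theorem IsCHadamard.sum_mul_conj_eq_zero {n : Type*} [Fintype n] [DecidableEq n]
    {H : Matrix n n ℂ} (hH : IsCHadamard H) {i j : n} (hij : i ≠ j) :
    ∑ l, H i l * conj (H j l) = 0 := by
  simpa [Matrix.mul_apply, Matrix.one_apply_ne hij] using congrFun (congrFun hH.2 i) j

theorem IsIncidence.sum_mul_eq {v k lam : ℕ} {B : Matrix (Fin v) (Fin v) ℂ}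
    (hB : IsIncidence v k lam B) {i j : Fin v} (hij : i ≠ j) :
    ∑ l, B i l * B j l = lam := by
  simpa [Matrix.mul_apply, Matrix.one_apply_ne hij] using congrFun (congrFun hB.2.2.2 i) j

theorem card_eq_of_orthogonal_filled_rows {ι : Type*} [Fintype ι] {x y : ι → ℂ}
    (hx : ∀ l, x l = 0 ∨ x l = 1) (hy : ∀ l, y l = 0 ∨ y l = 1) {a : ℂ} (ha : ‖a‖ = 1)
    {k lam : ℝ} (hxk : ∑ l, x l = k) (hyk : ∑ l, y l = k) (hxy : ∑ l, x l * y l = lam)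
    (horth : ∑ l, (if x l = 0 then a else x l) * conj (if y l = 0 then a else y l) = 0) :
    (Fintype.card ι : ℝ) = (2 - 2 * a.re) * (k - lam) := by
  have hfill : ∀ b : ℂ, (b = 0 ∨ b = 1) → (if b = 0 then a else b) = b + a * (1 - b) := by
    rintro b (rfl | rfl) <;> simp
  have hy_real : ∀ l, conj (y l) = y l := fun l => by rcases hy l with h | h <;> simp [h]
  have ha_unit : a * conj a = 1 := by
    rw [Complex.mul_conj, Complex.normSq_eq_norm_sq, ha]; norm_num
  have hterm : ∀ l, (if x l = 0 then a else x l) * conj (if y l = 0 then a else y l) =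
      (1 - a) * (1 - conj a) * (x l * y l) + conj a * (1 - a) * x l
        + a * (1 - conj a) * y l + a * conj a := by
    intro l
    rw [hfill _ (hx l), hfill _ (hy l), map_add, map_mul, map_sub, map_one, hy_real]
    ring
  simp only [hterm, Finset.sum_add_distrib, ← Finset.mul_sum, Finset.sum_const,
    Finset.card_univ, nsmul_eq_mul, hxk, hyk, hxy, ha_unit] at horth
  have hcard : (Fintype.card ι : ℂ) = (2 - (a + conj a)) * (k - lam) := by
    linear_combination horth + (2 * (k : ℂ) - lam) * ha_unit
  rw [Complex.add_conj] at hcard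
  exact_mod_cast hcard

theorem stmt6 (v k lam : ℕ) (hlk : lam < k)
    (B : Matrix (Fin v) (Fin v) ℂ) (hB : IsIncidence v k lam B)
    (h : ∃ a : ℂ, ‖a‖ = 1 ∧
        IsCHadamard (Matrix.of fun i j => if B i j = 0 then a else B i j)) :
    v ≤ 4 * (k - lam) := by
  obtain ⟨a, ha, hH⟩ := h
  obtain hv | hv := Nat.lt_or_ge v 2
  · omega
  have hij : (⟨0, by omega⟩ : Fin v) ≠ ⟨1, by omega⟩ := by simp
  have hv_eq := card_eq_of_orthogonal_filled_rows (hB.1 _) (hB.1 _) ha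
    (by exact_mod_cast hB.2.1 _) (by exact_mod_cast hB.2.1 _)
    (by exact_mod_cast hB.sum_mul_eq hij) (hH.sum_mul_conj_eq_zero hij)
  rw [Fintype.card_fin] at hv_eq
  have hre : -1 ≤ a.re := by
    have := Complex.abs_re_le_norm a
    rw [ha] at this
    exact (abs_le.mp this).1
  have hlk' : (lam : ℝ) ≤ k := by exact_mod_cast hlk.le
  have hv_le : (v : ℝ) ≤ 4 * ((k : ℝ) - lam) := by rw [hv_eq]; nlinarith
  rw [← Nat.cast_le (α := ℝ)]
  push_cast [Nat.cast_sub hlk.le]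
  exact hv_le
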